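/- arXiv:1909.01889 — 6 statements merged into one kernel-verified Lean document; each statement's English description precedes it below -/
import Mathlib

section
/- Let β ∈ (0,1), 0 ≤ y_L < y_H, R > 0, λ ∈ (0,1], and μ > β − 1 with μ > 2β − 1 so that 2(1−β) + μ > 0. Define ψ*(μ) = [ (β/2)·((1+λ)y_H + (1−λ)y_L) − (1+μ−β)·y_L ] / (2(1−β) + μ). Then dψ*/dμ < 0 if and only if (β/2)((1+λ)y_H+(1−λ)y_L) − (1+μ−β)y_L + y_L·(2(1−β)+μ) > 0, i.e. if and only if (β/2)((1+λ)y_H+(1−λ)y_L) + (1−β)y_L > 0, which always holds when y_H > 0; hence ψ* is strictly decreasing in μ on [β−1, ∞). -/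
/-- The steady-state asset price
`ψ*(μ) = [(β/2)((1+lam)y_H+(1−lam)y_L) − (1+μ−β)y_L]/(2(1−β)+μ)`
is strictly decreasing in the money growth rate `μ` on `[β−1, ∞)`. -/
theorem asset_price_decreasing_in_money_growth
    (β yL yH R lam : ℝ) (hβ : β ∈ Set.Ioo (0:ℝ) 1)
    (hyL : 0 ≤ yL) (hy : yL < yH) (hyH : 0 < yH) (hR : 0 < R)
    (hlam : lam ∈ Set.Ioc (0:ℝ) 1)
    (ψstar : ℝ → ℝ)
    (hψ : ∀ μ, ψstar μ =
      (β / 2 * ((1 + lam) * yH + (1 - lam) * yL) - (1 + μ - β) * yL)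
        / (2 * (1 - β) + μ)) :
    StrictAntiOn ψstar (Set.Ici (β - 1)) := by
  obtain ⟨hβ0, hβ1⟩ := hβ
  obtain ⟨hl0, hl1⟩ := hlam
  intro a ha b hb hab
  simp only [Set.mem_Ici] at ha hb
  rw [hψ a, hψ b]
  have hda : 0 < 2 * (1 - β) + a := by linarith
  have hdb : 0 < 2 * (1 - β) + b := by linarith
  rw [div_lt_div_iff₀ hdb hda]
  have hab' : 0 < b - a := sub_pos.mpr hab
  nlinarith [mul_pos hab' (mul_pos (half_pos hβ0) hyH),
    mul_nonneg hab'.le (mul_nonneg (sub_nonneg.mpr hβ1.le) hyL),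
    mul_nonneg hab'.le (mul_nonneg (mul_nonneg (half_pos hβ0).le (sub_nonneg.mpr hl1)) hyL),
    mul_nonneg hab'.le (mul_nonneg (mul_nonneg (half_pos hβ0).le hl0.le) (sub_nonneg.mpr hy.le))]
end

section
/- Let β ∈ (0,1), 0 ≤ y_L < y_H, R > 0, and λ > 0. Assume (1/2)·((1+λ)y_H + (1−λ)y_L) ≥ R. At the Friedman rule μ = β − 1, the asset price ψ*(β−1) = [ (β/2)·((1+λ)y_H + (1−λ)y_L) ] / (1−β) satisfies ψ*(β−1) ≥ βR/(1−β), with equality only if (1/2)((1+λ)y_H + (1−λ)y_L) = R. -/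
/-- At the Friedman rule `μ = β − 1`, the asset price exceeds the
fundamental value `βR/(1−β)`, with equality only if
`(1/2)((1+lam)y_H+(1−lam)y_L) = R`. -/
theorem liquidity_premium_at_friedman_rule
    (β yL yH R lam : ℝ) (hβ : β ∈ Set.Ioo (0:ℝ) 1)
    (hyL : 0 ≤ yL) (hy : yL < yH) (hR : 0 < R) (hlam : 0 < lam)
    (hα : (1 / 2) * ((1 + lam) * yH + (1 - lam) * yL) ≥ R) :
    (β / 2 * ((1 + lam) * yH + (1 - lam) * yL)) / (1 - β) ≥ β * R / (1 - β) ∧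
    ((β / 2 * ((1 + lam) * yH + (1 - lam) * yL)) / (1 - β) = β * R / (1 - β) →
      (1 / 2) * ((1 + lam) * yH + (1 - lam) * yL) = R) := by
  obtain ⟨hβ0, hβ1⟩ := hβ
  have h1 : (0:ℝ) < 1 - β := by linarith
  constructor
  · apply div_le_div_of_nonneg_right ?_ h1.le
    nlinarith
  · intro h
    have h2 : β / 2 * ((1 + lam) * yH + (1 - lam) * yL) = β * R :=
      by field_simp at h; nlinarith [mul_pos hβ0 h1]
    nlinarith
end

section
/- Let β ∈ (0,1), 0 ≤ y_L < y_H, R > 0, λ > 0, and suppose α := (1/2)((1+λ)y_H + (1−λ)y_L) − R > 0. Define μ̄ = β − 1 + β(1−β)α / (y_L(1−β) + βR). Then ψ*(μ̄) = βR/(1−β), where ψ*(μ) = [(β/2)((1+λ)y_H+(1−λ)y_L) − (1+μ−β)y_L]/(2(1−β)+μ). Moreover μ̄ > 0 if and only if α > ((1−β)/β)·y_L + R. -/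
/-- The upper bound `μ̄` of admissible money growth rates: the asset price
equals the fundamental value at `μ̄`, and `μ̄ > 0` iff
`α > ((1−β)/β)y_L + R`. -/
theorem upper_bound_money_growth
    (β yL yH R lam : ℝ) (hβ : β ∈ Set.Ioo (0:ℝ) 1)
    (hyL : 0 ≤ yL) (hy : yL < yH) (hR : 0 < R) (hlam : 0 < lam)
    (α : ℝ) (hα : α = (1 / 2) * ((1 + lam) * yH + (1 - lam) * yL) - R)
    (hαpos : 0 < α)
    (μbar : ℝ) (hμbar : μbar = β - 1 + β * (1 - β) * α / (yL * (1 - β) + β * R))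
    (ψstar : ℝ → ℝ)
    (hψ : ∀ μ, ψstar μ =
      (β / 2 * ((1 + lam) * yH + (1 - lam) * yL) - (1 + μ - β) * yL)
        / (2 * (1 - β) + μ)) :
    ψstar μbar = β * R / (1 - β) ∧
    (0 < μbar ↔ α > ((1 - β) / β) * yL + R) := by
  obtain ⟨hβ0, hβ1⟩ := hβ
  have hβ' : 0 < 1 - β := by linarith
  have hD : 0 < yL * (1 - β) + β * R := by nlinarith
  have hS : (1 + lam) * yH + (1 - lam) * yL = 2 * (α + R) := by rw [hα]; ring
  constructor
  · rw [hψ, hμbar, hS]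
    have hden : 2 * (1 - β) + (β - 1 + β * (1 - β) * α / (yL * (1 - β) + β * R)) > 0 := by
      have h1 : β * (1 - β) * α / (yL * (1 - β) + β * R) > 0 := div_pos (by positivity) hD
      nlinarith
    rw [div_eq_div_iff hden.ne' (by linarith : (0:ℝ) < 1 - β).ne']
    field_simp
    ring
  · rw [hμbar]
    have key : β - 1 + β * (1 - β) * α / (yL * (1 - β) + β * R)
        = (1 - β) * (β * α - (yL * (1 - β) + β * R)) / (yL * (1 - β) + β * R) := by
      field_simp; ring
    have keq : α - ((1 - β) / β * yL + R) = (β * α - (yL * (1 - β) + β * R)) / β := by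
      field_simp
    rw [key]
    constructor
    · intro h
      have h3 : 0 < (1 - β) * (β * α - (yL * (1 - β) + β * R)) := by
        rcases div_pos_iff.mp h with ⟨h1, _⟩ | ⟨_, hd⟩
        · exact h1
        · linarith
      have h4 : 0 < β * α - (yL * (1 - β) + β * R) := by nlinarith
      have : 0 < α - ((1 - β) / β * yL + R) := by rw [keq]; exact div_pos h4 hβ0
      linarith
    · intro h
      have h4 : 0 < β * α - (yL * (1 - β) + β * R) := by
        have h5 : 0 < α - ((1 - β) / β * yL + R) := by linarith
        rw [keq] at h5
        rcases div_pos_iff.mp h5 with ⟨h1, _⟩ | ⟨_, hd⟩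
        · exact h1
        · linarith
      exact div_pos (by positivity) hD
end

section
/- Let β ∈ (0,1), R > 0, 0 ≤ y_L < y_H, λ ∈ (0,1], θ ∈ (0,1), and set ψ = βR/(1−β). If φ = φ̂(1+μ) and (λφ̂/4)·(ψ+(1−θ)y_H+θy_L)/(ψ+y_L) ≥ φ − βφ̂ + λφ̂/4 with φ̂ > 0, then μ ≤ β − 1 + (λ/4)·(1−θ)(y_H−y_L)/(βR/(1−β) + y_L). -/
/-- Range of monetary policies consistent with monetary equilibrium in the
bargaining version: the money demand condition implies
`μ ≤ β − 1 + (lam/4)(1−θ)(y_H−y_L)/(βR/(1−β)+y_L)`. -/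
theorem policy_range_bargaining
    (β R yL yH lam θ φ φhat μ ψ : ℝ)
    (hβ : β ∈ Set.Ioo (0:ℝ) 1) (hR : 0 < R)
    (hyL : 0 ≤ yL) (hy : yL < yH)
    (hlam : lam ∈ Set.Ioc (0:ℝ) 1) (hθ : θ ∈ Set.Ioo (0:ℝ) 1)
    (hψ : ψ = β * R / (1 - β))
    (hφhat : 0 < φhat) (hss : φ = φhat * (1 + μ))
    (hfoc : (lam * φhat / 4) * ((ψ + (1 - θ) * yH + θ * yL) / (ψ + yL))
      ≥ φ - β * φhat + lam * φhat / 4) :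
    μ ≤ β - 1 + (lam / 4) * ((1 - θ) * (yH - yL) / (β * R / (1 - β) + yL)) := by
  subst hψ hss
  have h1β : (0:ℝ) < 1 - β := by linarith [hβ.2]
  have hA : 0 < β * R / (1 - β) + yL := by
    have : 0 < β * R / (1 - β) := div_pos (mul_pos hβ.1 hR) h1β
    linarith
  set A := β * R / (1 - β) + yL with hAdef
  have hfoc2 : (φhat * (1 + μ) - β * φhat + lam * φhat / 4) * A
      ≤ lam * φhat / 4 * (A + (1 - θ) * yH + θ * yL - yL) := by
    have h := hfoc
    rw [ge_iff_le] at h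
    have hnum : β * R / (1 - β) + (1 - θ) * yH + θ * yL
        = A + (1 - θ) * yH + θ * yL - yL := by rw [hAdef]; ring
    rw [hnum, show lam * φhat / 4 * ((A + (1 - θ) * yH + θ * yL - yL) / A)
        = lam * φhat / 4 * (A + (1 - θ) * yH + θ * yL - yL) / A from by ring,
      le_div_iff₀ hA] at h
    exact h
  rw [← sub_nonneg]
  have expand : β - 1 + lam / 4 * ((1 - θ) * (yH - yL) / A) - μ
      = (lam * φhat / 4 * (A + (1 - θ) * yH + θ * yL - yL)
        - (φhat * (1 + μ) - β * φhat + lam * φhat / 4) * A) / (A * φhat) := by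
    field_simp
    ring
  rw [expand]
  exact div_nonneg (by linarith) (by positivity)
end

section
/- Let φ > 0, ψ ≥ 0, 0 ≤ y_L < y_H, m > 0, s > 0, λ ∈ (0,1]. Define aggregate supply S(p) = (λ/2)·s·𝟙[p > (ψ+y_L)/φ] (with S(p) ∈ [0, (λ/2)s] at p = (ψ+y_L)/φ, S(p)=0 below) and aggregate demand D(p) = (λ/2)·(m/p)·𝟙[p < (ψ+y_H)/φ] (with D(p) ∈ [0, (λ/2)m/p] at p = (ψ+y_H)/φ, D(p)=0 above). Then there exists a market-clearing price p* with traded quantity Q* = (λ/2)·min{s, φm/(ψ+y_L)}, and p* = (ψ+y_L)/φ if φm < (ψ+y_L)s; p* = m/s if (ψ+y_L)s ≤ φm ≤ (ψ+y_H)s; p* = (ψ+y_H)/φ if φm > (ψ+y_H)s. In each case D(p*) ∋ Q* and S(p*) ∋ Q* (interpreting the correspondences). -/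
open Set

/-- Competitive equilibrium of the decentralized financial market: there is a
market-clearing price `p*` at which the traded quantity
`Q* = (lam/2)min{s, φm/(ψ+y_L)}` belongs to both the supply and the demand
correspondences, and `p*` takes the stated case-by-case form. -/
theorem dfm_market_clearing
    (φ ψ yL yH m s lam : ℝ) (hφ : 0 < φ) (hψ : 0 ≤ ψ) (hyL : 0 ≤ yL)
    (hy : yL < yH) (hm : 0 < m) (hs : 0 < s) (hlam : lam ∈ Set.Ioc (0:ℝ) 1)
    (hpos : 0 < ψ + yL)
    (S D : ℝ → Set ℝ)
    (hS : ∀ p, S p =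
      if p < (ψ + yL) / φ then {0}
      else if p = (ψ + yL) / φ then Icc 0 ((lam / 2) * s)
      else {(lam / 2) * s})
    (hD : ∀ p, D p =
      if (ψ + yH) / φ < p then {0}
      else if p = (ψ + yH) / φ then Icc 0 ((lam / 2) * (m / p))
      else {(lam / 2) * (m / p)})
    (Q : ℝ) (hQ : Q = (lam / 2) * min s (φ * m / (ψ + yL))) :
    ∃ pstar : ℝ,
      ((φ * m < (ψ + yL) * s → pstar = (ψ + yL) / φ) ∧
       ((ψ + yL) * s ≤ φ * m ∧ φ * m ≤ (ψ + yH) * s → pstar = m / s) ∧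
       (φ * m > (ψ + yH) * s → pstar = (ψ + yH) / φ)) ∧
      Q ∈ S pstar ∧ Q ∈ D pstar := by
  obtain ⟨hlam0, hlam1⟩ := hlam
  have hlam2 : (0:ℝ) < lam / 2 := by linarith
  have hposH : 0 < ψ + yH := by linarith
  have hyLH : (ψ + yL) / φ < (ψ + yH) / φ := by
    rw [div_lt_div_iff₀ hφ hφ]; nlinarith
  have hvalL : m / ((ψ + yL) / φ) = φ * m / (ψ + yL) := by
    field_simp
  have hvalH : m / ((ψ + yH) / φ) = φ * m / (ψ + yH) := by
    field_simp
  have hvalS : m / (m / s) = s := by field_simp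
  rcases lt_trichotomy (φ * m) ((ψ + yL) * s) with h1 | h1 | h1
  · -- case 1 : pstar = (ψ+yL)/φ
    have hmin : min s (φ * m / (ψ + yL)) = φ * m / (ψ + yL) :=
      min_eq_right (by rw [div_le_iff₀ hpos]; nlinarith)
    refine ⟨(ψ + yL) / φ, ⟨fun _ => rfl, fun h => absurd h.1 (not_le.mpr h1),
      fun h => absurd h (by nlinarith)⟩, ?_, ?_⟩
    · rw [hS, if_neg (lt_irrefl _), if_pos rfl]
      refine ⟨by rw [hQ]; positivity, ?_⟩
      rw [hQ, hmin]
      exact mul_le_mul_of_nonneg_left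
        (by rw [div_le_iff₀ hpos]; nlinarith) hlam2.le
    · rw [hD, if_neg (not_lt.mpr hyLH.le), if_neg (ne_of_lt hyLH),
        mem_singleton_iff, hQ, hmin, hvalL]
  · -- boundary: φm = (ψ+yL)s, pstar = m/s = (ψ+yL)/φ
    have hpeq : m / s = (ψ + yL) / φ := by
      rw [div_eq_div_iff hs.ne' hφ.ne']; linear_combination h1
    have hmin : min s (φ * m / (ψ + yL)) = s :=
      min_eq_left (by rw [le_div_iff₀ hpos]; nlinarith)
    have hlt : m / s < (ψ + yH) / φ := hpeq ▸ hyLH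
    refine ⟨m / s, ⟨fun h => absurd h (by linarith), fun _ => rfl,
      fun h => absurd h (by nlinarith)⟩, ?_, ?_⟩
    · rw [hS, hpeq, if_neg (lt_irrefl _), if_pos rfl]
      exact ⟨by rw [hQ]; positivity, by rw [hQ, hmin]⟩
    · rw [hD, if_neg (not_lt.mpr hlt.le), if_neg (ne_of_lt hlt),
        mem_singleton_iff, hQ, hmin, hvalS]
  · -- φm > (ψ+yL)s
    have hmin : min s (φ * m / (ψ + yL)) = s :=
      min_eq_left (by rw [le_div_iff₀ hpos]; nlinarith)
    rcases lt_trichotomy (φ * m) ((ψ + yH) * s) with h2 | h2 | h2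
    · -- interior: pstar = m/s
      have hlow : (ψ + yL) / φ < m / s := by
        rw [div_lt_div_iff₀ hφ hs]; nlinarith
      have hhigh : m / s < (ψ + yH) / φ := by
        rw [div_lt_div_iff₀ hs hφ]; nlinarith
      refine ⟨m / s, ⟨fun h => absurd h (by linarith), fun _ => rfl,
        fun h => absurd h (by linarith)⟩, ?_, ?_⟩
      · rw [hS, if_neg (not_lt.mpr hlow.le), if_neg (ne_of_gt hlow),
          mem_singleton_iff, hQ, hmin]
      · rw [hD, if_neg (not_lt.mpr hhigh.le), if_neg (ne_of_lt hhigh),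
          mem_singleton_iff, hQ, hmin, hvalS]
    · -- boundary: φm = (ψ+yH)s, pstar = m/s = (ψ+yH)/φ
      have hpeq : m / s = (ψ + yH) / φ := by
        rw [div_eq_div_iff hs.ne' hφ.ne']; linear_combination h2
      have hlow : (ψ + yL) / φ < m / s := by
        rw [div_lt_div_iff₀ hφ hs]; nlinarith
      refine ⟨m / s, ⟨fun h => absurd h (by linarith), fun _ => rfl,
        fun h => absurd h (by linarith)⟩, ?_, ?_⟩
      · rw [hS, if_neg (not_lt.mpr hlow.le), if_neg (ne_of_gt hlow),
          mem_singleton_iff, hQ, hmin]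
      · rw [hD, if_neg (not_lt.mpr hpeq.le), if_pos hpeq, hvalS]
        exact ⟨by rw [hQ]; positivity, by rw [hQ, hmin]⟩
    · -- pstar = (ψ+yH)/φ
      refine ⟨(ψ + yH) / φ, ⟨fun h => absurd h (by linarith),
        fun h => absurd h.2 (not_le.mpr h2), fun _ => rfl⟩, ?_, ?_⟩
      · rw [hS, if_neg (not_lt.mpr hyLH.le), if_neg (ne_of_gt hyLH),
          mem_singleton_iff, hQ, hmin]
      · rw [hD, if_neg (lt_irrefl _), if_pos rfl, hvalH]
        refine ⟨by rw [hQ]; positivity, ?_⟩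
        rw [hQ, hmin]
        exact mul_le_mul_of_nonneg_left
          (by rw [le_div_iff₀ hposH]; nlinarith) hlam2.le
end

section
/- Let β ∈ (0,1), 0 ≤ y_L < y_H, R > 0, λ ∈ (0,1], and suppose (1/2)((1+λ)y_H + (1−λ)y_L) ≥ R. Then for every μ in the interval [β−1, μ̄] where μ̄ = β−1 + β(1−β)α/(y_L(1−β)+βR) and α = (1/2)((1+λ)y_H+(1−λ)y_L) − R, the equilibrium price ψ*(μ) = [(β/2)((1+λ)y_H+(1−λ)y_L) − (1+μ−β)y_L]/(2(1−β)+μ) satisfies ψ*(μ) ≥ βR/(1−β), with equality exactly at μ = μ̄. -/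
/-- On the whole admissible policy range `[β−1, μ̄]` the equilibrium asset
price exceeds the fundamental value, with equality exactly at `μ = μ̄`. -/
theorem liquidity_premium_on_policy_range
    (β yL yH R lam : ℝ) (hβ : β ∈ Set.Ioo (0:ℝ) 1)
    (hyL : 0 ≤ yL) (hy : yL < yH) (hR : 0 < R) (hlam : lam ∈ Set.Ioc (0:ℝ) 1)
    (hα : (1 / 2) * ((1 + lam) * yH + (1 - lam) * yL) ≥ R)
    (α : ℝ) (hαdef : α = (1 / 2) * ((1 + lam) * yH + (1 - lam) * yL) - R)
    (μbar : ℝ) (hμbar : μbar = β - 1 + β * (1 - β) * α / (yL * (1 - β) + β * R))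
    (ψstar : ℝ → ℝ)
    (hψ : ∀ μ, ψstar μ =
      (β / 2 * ((1 + lam) * yH + (1 - lam) * yL) - (1 + μ - β) * yL)
        / (2 * (1 - β) + μ)) :
    ∀ μ ∈ Set.Icc (β - 1) μbar,
      ψstar μ ≥ β * R / (1 - β) ∧
      (ψstar μ = β * R / (1 - β) ↔ μ = μbar) := by
  obtain ⟨hβ0, hβ1⟩ := hβ
  have h1β : (0:ℝ) < 1 - β := by linarith
  have hD : 0 < yL * (1 - β) + β * R := by
    have := mul_nonneg hyL h1β.le
    nlinarith
  intro μ hμ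
  obtain ⟨hμ1, hμ2⟩ := hμ
  have hden : 0 < 2 * (1 - β) + μ := by linarith
  have key : ψstar μ - β * R / (1 - β) =
      (yL * (1 - β) + β * R) * (μbar - μ) / ((1 - β) * (2 * (1 - β) + μ)) := by
    rw [hψ, hμbar, hαdef]
    field_simp
    ring
  have hnum : 0 ≤ (yL * (1 - β) + β * R) * (μbar - μ) :=
    mul_nonneg hD.le (by linarith)
  have hge : 0 ≤ (yL * (1 - β) + β * R) * (μbar - μ) / ((1 - β) * (2 * (1 - β) + μ)) :=
    div_nonneg hnum (by positivity)
  refine ⟨by linarith [key ▸ hge], ?_, ?_⟩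
  · intro h
    have h0 : (yL * (1 - β) + β * R) * (μbar - μ) / ((1 - β) * (2 * (1 - β) + μ)) = 0 := by
      rw [← key, h]; ring
    have hd : (1 - β) * (2 * (1 - β) + μ) ≠ 0 := by positivity
    have := (div_eq_zero_iff.mp h0).resolve_right hd
    nlinarith
  · intro h
    rw [h] at key ⊢
    have : ψstar μbar - β * R / (1 - β) = 0 := by rw [key]; ring
    linarith
end
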